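/- arXiv:2404.02302 — 3 statements merged into one kernel-verified Lean document; each statement's English description precedes it below -/
import Mathlib

section
/- Fix c ∈ {1,−1} and define on ℝ³₊ = {(u₀,u₁,u₂) : u₀ > 0} the 1-form θ = ⟨N(u), du⟩ where N is the ℝ³-valued polynomial map such that P × Q = u₀²(u₀² − c)·N, with P(u) = (u₀²(u₀²−c)·u₀u₁, u₀²(u₀²−c)·(2(u₀²−c)(9u₁²+1)+cu₀⁴(9u₂²+1)−u₀²)/(9(u₀²−c)), u₀²(u₀²−c)·(−cu₁u₂/(u₀²−c))) and Q(u) = (u₀²(u₀²−c)·u₀u₂, −u₀²(u₀²−c)·u₀²u₁u₂/(u₀²−c), u₀²(u₀²−c)·(−2u₀²(u₀²−c)(9u₂²+1)+9u₁²+1−cu₀²)/(9u₀²(u₀²−c))). Then the function L(u) = u₀⁴(u₀²(9u₂²+1)+c(9u₁²+1))² / (u₀⁴(9u₂²+1)+cu₀²+(9u₁²+1))³ satisfies θ ∧ dL = 0 wherever defined. -/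
/-- The first integral `L`. -/
noncomputable def Lfun (c u₀ u₁ u₂ : ℝ) : ℝ :=
  u₀ ^ 4 * (u₀ ^ 2 * (9 * u₂ ^ 2 + 1) + c * (9 * u₁ ^ 2 + 1)) ^ 2 /
    (u₀ ^ 4 * (9 * u₂ ^ 2 + 1) + c * u₀ ^ 2 + (9 * u₁ ^ 2 + 1)) ^ 3

/-- The ℝ³-valued coefficient of `ω₁`. -/
noncomputable def Pvec (c : ℝ) (u : Fin 3 → ℝ) : Fin 3 → ℝ :=
  ![u 0 ^ 2 * (u 0 ^ 2 - c) * (u 0 * u 1),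
    u 0 ^ 2 * (u 0 ^ 2 - c) *
      ((2 * (u 0 ^ 2 - c) * (9 * u 1 ^ 2 + 1) + c * u 0 ^ 4 * (9 * u 2 ^ 2 + 1) - u 0 ^ 2) /
        (9 * (u 0 ^ 2 - c))),
    u 0 ^ 2 * (u 0 ^ 2 - c) * (-(c * u 1 * u 2) / (u 0 ^ 2 - c))]

/-- The ℝ³-valued coefficient of `ω₂`. -/
noncomputable def Qvec (c : ℝ) (u : Fin 3 → ℝ) : Fin 3 → ℝ :=
  ![u 0 ^ 2 * (u 0 ^ 2 - c) * (u 0 * u 2),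
    -(u 0 ^ 2 * (u 0 ^ 2 - c) * (u 0 ^ 2 * u 1 * u 2 / (u 0 ^ 2 - c))),
    u 0 ^ 2 * (u 0 ^ 2 - c) *
      ((-(2 * u 0 ^ 2 * (u 0 ^ 2 - c) * (9 * u 2 ^ 2 + 1)) + 9 * u 1 ^ 2 + 1 - c * u 0 ^ 2) /
        (9 * u 0 ^ 2 * (u 0 ^ 2 - c)))]

set_option maxHeartbeats 1000000 in
/-- θ ∧ dL = 0: the gradient of `L` is parallel to `N`, where
`P × Q = u₀²(u₀² - c) • N`. -/
theorem stmt_3 (c : ℝ) (hc : c = 1 ∨ c = -1)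
    (N : (Fin 3 → ℝ) → (Fin 3 → ℝ))
    (hN : ∀ u : Fin 3 → ℝ,
      crossProduct (Pvec c u) (Qvec c u) = (u 0 ^ 2 * (u 0 ^ 2 - c)) • N u)
    (u : Fin 3 → ℝ) (hu0 : 0 < u 0) (hu0c : u 0 ^ 2 ≠ c)
    (hden : u 0 ^ 4 * (9 * u 2 ^ 2 + 1) + c * u 0 ^ 2 + (9 * u 1 ^ 2 + 1) ≠ 0)
    (d₀ d₁ d₂ : ℝ)
    (h₀ : HasDerivAt (fun r => Lfun c r (u 1) (u 2)) d₀ (u 0))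
    (h₁ : HasDerivAt (fun r => Lfun c (u 0) r (u 2)) d₁ (u 1))
    (h₂ : HasDerivAt (fun r => Lfun c (u 0) (u 1) r) d₂ (u 2)) :
    crossProduct (N u) ![d₀, d₁, d₂] = 0 := by
  have hu0' : u 0 ≠ 0 := ne_of_gt hu0
  have hsc : u 0 ^ 2 - c ≠ 0 := sub_ne_zero.mpr hu0c
  simp only [Lfun] at h₀ h₁ h₂
  have e0 := h₀.unique
    (((hasDerivAt_pow 4 (u 0)).mul
        ((((hasDerivAt_pow 2 (u 0)).mul_const (9 * u 2 ^ 2 + 1)).add_const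
          (c * (9 * u 1 ^ 2 + 1))).pow 2)).div
      (((((hasDerivAt_pow 4 (u 0)).mul_const (9 * u 2 ^ 2 + 1)).add
        ((hasDerivAt_pow 2 (u 0)).const_mul c)).add_const (9 * u 1 ^ 2 + 1)).pow 3)
      (pow_ne_zero 3 hden))
  have e1 := h₁.unique
    ((((((((hasDerivAt_pow 2 (u 1)).const_mul 9).add_const 1).const_mul c).const_add
        (u 0 ^ 2 * (9 * u 2 ^ 2 + 1))).pow 2).const_mul (u 0 ^ 4)).div
      ((((((hasDerivAt_pow 2 (u 1)).const_mul 9).add_const 1)).const_add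
        (u 0 ^ 4 * (9 * u 2 ^ 2 + 1) + c * u 0 ^ 2)).pow 3)
      (pow_ne_zero 3 hden))
  have e2 := h₂.unique
    ((((((((hasDerivAt_pow 2 (u 2)).const_mul 9).add_const 1).const_mul (u 0 ^ 2)).add_const
        (c * (9 * u 1 ^ 2 + 1))).pow 2).const_mul (u 0 ^ 4)).div
      (((((((hasDerivAt_pow 2 (u 2)).const_mul 9).add_const 1).const_mul (u 0 ^ 4)).add_const
        (c * u 0 ^ 2)).add_const (9 * u 1 ^ 2 + 1)).pow 3)
      (pow_ne_zero 3 hden))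
  clear h₀ h₁ h₂
  have hs : u 0 ^ 2 * (u 0 ^ 2 - c) ≠ 0 := mul_ne_zero (pow_ne_zero 2 hu0') hsc
  have hpar : ∀ v : Fin 3 → ℝ,
      (crossProduct ((crossProduct (Pvec c u)) (Qvec c u))) v = 0 →
      (crossProduct (N u)) v = 0 := by
    intro v hv
    have key := congrArg (fun w => (crossProduct w) v) (hN u)
    simp only [map_smul, LinearMap.smul_apply, hv] at key
    exact (smul_eq_zero.mp key.symm).resolve_left hs
  apply hpar
  set a1 : ℝ := 9 * u 1 ^ 2 + 1 with ha1
  set a2 : ℝ := 9 * u 2 ^ 2 + 1 with ha2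
  set A : ℝ := u 0 ^ 2 * a2 + c * a1 with hA
  set B : ℝ := u 0 ^ 4 * a2 + c * u 0 ^ 2 + a1 with hB
  clear_value a1 a2 A B
  have hBne : B ≠ 0 := hden
  have hK : ![d₀, d₁, d₂] =
      (u 0 ^ 3 * A / B ^ 4) •
        ![2 * (2 * A * B + 2 * u 0 ^ 2 * a2 * B - 6 * u 0 ^ 4 * a2 * A - 3 * c * u 0 ^ 2 * A),
          18 * u 1 * u 0 * (2 * c * B - 3 * A),
          18 * u 2 * u 0 ^ 3 * (2 * B - 3 * u 0 ^ 2 * A)] := by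
    funext i
    fin_cases i <;>
      simp only [Matrix.cons_val_zero, Matrix.cons_val_one, Matrix.head_cons,
        Matrix.cons_val_two, Matrix.tail_cons, Pi.smul_apply, smul_eq_mul,
        Matrix.cons_val_fin_one, Fin.isValue, e0, e1, e2, Pi.pow_apply, Pi.mul_apply, Pi.add_apply]
    · push_cast
      field_simp
      subst hA hB
      ring
    · push_cast
      field_simp
      subst hA hB ha1 ha2
      ring
    · push_cast
      field_simp
      subst hA hB ha1 ha2
      ring
  rw [hK, map_smul]
  suffices h : (crossProduct ((crossProduct (Pvec c u)) (Qvec c u)))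
      ![2 * (2 * A * B + 2 * u 0 ^ 2 * a2 * B - 6 * u 0 ^ 4 * a2 * A - 3 * c * u 0 ^ 2 * A),
        18 * u 1 * u 0 * (2 * c * B - 3 * A),
        18 * u 2 * u 0 ^ 3 * (2 * B - 3 * u 0 ^ 2 * A)] = 0 by
    rw [h]; simp
  rw [cross_apply, cross_apply]
  rcases hc with rfl | rfl <;>
  · funext i
    fin_cases i <;>
    · simp only [Pvec, Qvec, Matrix.cons_val_zero, Matrix.cons_val_one, Matrix.head_cons,
        Matrix.cons_val_two, Matrix.tail_cons, Pi.zero_apply, Matrix.cons_val_fin_one,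
        Matrix.zero_apply, hA, hB, ha1, ha2, Fin.isValue, Fin.zero_eta, Fin.mk_one, Fin.reduceFinMk,
        Matrix.cons_val]
      field_simp
      ring
end

section
/- For c ∈ {1,−1} and u₀ > 0 with u₀⁴(9u₂²+1)+cu₀²+(9u₁²+1) > 0, the function L(u₀,u₁,u₂) = u₀⁴(u₀²(9u₂²+1)+c(9u₁²+1))² / (u₀⁴(9u₂²+1)+cu₀²+(9u₁²+1))³ satisfies 0 ≤ L ≤ 4/27. -/
lemma key_stmt4 (t p q : ℝ) (hp : 0 ≤ p) (hq : 0 ≤ q) :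
    27 * (t^2 + p + t + t*q)^2 ≤ 4 * (t^2 + p + t + 1 + q)^3 := by
  set D : ℝ := t^2 + p + t + 1 + q with hD
  rcases le_or_gt (p * ((1 - t) * (2*t*(t+1) + p*(1+t) + 2*t*q))) 0 with h | h
  · have hid : 4*D^3 - 27*(t*D - t^3)^2 = (D - 3*t^2)^2 * ((t+2)^2 + 4*p + 4*q) := by
      rw [hD]; ring
    have hsq : (t^2 + p + t + t*q)^2 - (t*D - t^3)^2
        = p * ((1 - t) * (2*t*(t+1) + p*(1+t) + 2*t*q)) := by
      rw [hD]; ring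
    nlinarith [mul_nonneg (sq_nonneg (D - 3*t^2)) (by positivity : (0:ℝ) ≤ (t+2)^2 + 4*p + 4*q)]
  · have hp0 : 0 < p := by
      rcases hp.lt_or_eq with h' | h'
      · exact h'
      · exfalso; rw [← h'] at h; simp at h
    have hX : 0 < (1 - t) * (2*t*(t+1) + p*(1+t) + 2*t*q) := by
      by_contra hX
      push_neg at hX
      nlinarith
    have hT : 0 < (1 - t) * (2*t*(t+1) + 2*p + q*(1+t)) := by
      nlinarith [mul_nonneg (sq_nonneg (1-t)) hp, mul_nonneg (sq_nonneg (1-t)) hq]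
    have hsq : (t^2 + p + t + t*q)^2 - (D - 1)^2
        = -(q * ((1 - t) * (2*t*(t+1) + 2*p + q*(1+t)))) := by
      rw [hD]; ring
    have hid : 4*D^3 - 27*(D - 1)^2 = (D - 3)^2 * ((2*t+1)^2 + 4*p + 4*q) := by
      rw [hD]; ring
    nlinarith [mul_nonneg hq hT.le,
      mul_nonneg (sq_nonneg (D - 3)) (by positivity : (0:ℝ) ≤ (2*t+1)^2 + 4*p + 4*q)]

theorem stmt_4 (c u₀ u₁ u₂ : ℝ) (hc : c = 1 ∨ c = -1) (hu₀ : 0 < u₀)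
    (hden : 0 < u₀ ^ 4 * (9 * u₂ ^ 2 + 1) + c * u₀ ^ 2 + (9 * u₁ ^ 2 + 1)) :
    0 ≤ Lfun c u₀ u₁ u₂ ∧ Lfun c u₀ u₁ u₂ ≤ 4 / 27 := by
  have hD3 : 0 < (u₀ ^ 4 * (9 * u₂ ^ 2 + 1) + c * u₀ ^ 2 + (9 * u₁ ^ 2 + 1)) ^ 3 :=
    pow_pos hden 3
  constructor
  · exact div_nonneg (by positivity) hD3.le
  · rw [Lfun, div_le_iff₀ hD3]
    have hkey : 27 * (u₀ ^ 4 * (u₀ ^ 2 * (9 * u₂ ^ 2 + 1) + c * (9 * u₁ ^ 2 + 1)) ^ 2)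
        ≤ 4 * (u₀ ^ 4 * (9 * u₂ ^ 2 + 1) + c * u₀ ^ 2 + (9 * u₁ ^ 2 + 1)) ^ 3 := by
      rcases hc with rfl | rfl
      · have h := key_stmt4 (u₀^2) (9*u₀^4*u₂^2) (9*u₁^2) (by positivity) (by positivity)
        calc 27 * (u₀ ^ 4 * (u₀ ^ 2 * (9 * u₂ ^ 2 + 1) + 1 * (9 * u₁ ^ 2 + 1)) ^ 2)
            = 27 * ((u₀^2)^2 + 9*u₀^4*u₂^2 + u₀^2 + u₀^2*(9*u₁^2))^2 := by ring
          _ ≤ 4 * ((u₀^2)^2 + 9*u₀^4*u₂^2 + u₀^2 + 1 + 9*u₁^2)^3 := h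
          _ = 4 * (u₀ ^ 4 * (9 * u₂ ^ 2 + 1) + 1 * u₀ ^ 2 + (9 * u₁ ^ 2 + 1)) ^ 3 := by ring
      · have h := key_stmt4 (-(u₀^2)) (9*u₀^4*u₂^2) (9*u₁^2) (by positivity) (by positivity)
        calc 27 * (u₀ ^ 4 * (u₀ ^ 2 * (9 * u₂ ^ 2 + 1) + (-1) * (9 * u₁ ^ 2 + 1)) ^ 2)
            = 27 * ((-(u₀^2))^2 + 9*u₀^4*u₂^2 + (-(u₀^2)) + (-(u₀^2))*(9*u₁^2))^2 := by ring
          _ ≤ 4 * ((-(u₀^2))^2 + 9*u₀^4*u₂^2 + (-(u₀^2)) + 1 + 9*u₁^2)^3 := h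
          _ = 4 * (u₀ ^ 4 * (9 * u₂ ^ 2 + 1) + (-1) * u₀ ^ 2 + (9 * u₁ ^ 2 + 1)) ^ 3 := by ring
    linarith
end

section
/- With L as above, L(u₀,u₁,u₂) = 4/27 if and only if (u₀,u₁,u₂) lies on C₁ ∪ C₂, where C₁ = {u₂ = 0, 9u₁² = (2u₀²+c)(u₀²−c)} and C₂ = {u₁ = 0, 9u₂² = (2u₀⁻²+c)(u₀⁻²−c)}. -/
set_option maxHeartbeats 1000000

private lemma sqz {a : ℝ} (h : a ^ 2 = 0) : a = 0 := by
  nlinarith [sq_nonneg a, sq_nonneg (a - 1), sq_nonneg (a + 1)]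

lemma double_root (N D : ℝ) (hD : 0 < D) (h : 27 * N ^ 2 = 4 * D ^ 3) :
    ∃ r : ℝ, D = 3 * r ^ 2 ∧ N = 2 * r ^ 3 := by
  have hDne : D ≠ 0 := hD.ne'
  refine ⟨3 * N / (2 * D), ?_, ?_⟩
  · field_simp
    ring_nf
    linear_combination -h
  · field_simp
    ring_nf
    linear_combination -N * h

lemma aux_key (X Y Z r : ℝ) (hf : X + Y + Z = 3 * r ^ 2) (hg : X + Y * Z = 2 * r ^ 3)
    (hX : Y ^ 2 ≤ X) (hZ : 1 ≤ Z) (hY : Y ≠ 0) :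
    (X = Y ^ 2 ∧ Z = 2 * Y ^ 2 - Y) ∨ (Z = 1 ∧ X + Y = 2) := by
  have key1 : (Z - 1) * (1 - Y) = -((r - 1) ^ 2 * (2 * r + 1)) := by
    linear_combination hf - hg
  have key2 : (X - Y ^ 2) * (1 - Y) = (Y - r) ^ 2 * (Y + 2 * r) := by
    linear_combination (-Y) * hf + hg
  rcases lt_trichotomy Y 0 with hneg | h0 | hpos
  · -- Y < 0, so 1 - Y > 0
    have h1Y : 0 < 1 - Y := by linarith
    rcases lt_trichotomy r (-1 / 2) with hr | hr | hr
    · -- 2r+1 < 0, Y + 2r < 0, key2 forces X ≤ Y² hence X = Y², then Y = r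
      have hle : X ≤ Y ^ 2 := by
        nlinarith [key2, mul_nonneg (sq_nonneg (Y - r)) (by linarith : (0:ℝ) ≤ -(Y + 2 * r))]
      have hXY : X = Y ^ 2 := le_antisymm hle hX
      have h00 : (Y - r) ^ 2 * (Y + 2 * r) = 0 := by
        linear_combination -key2 + (1 - Y) * hXY
      have hYr : Y = r := by
        rcases mul_eq_zero.mp h00 with h | h
        · have := sqz h; linarith
        · linarith
      exact Or.inl ⟨hXY, by linear_combination hf - hXY - 3 * (Y + r) * hYr⟩
    · -- r = -1/2
      subst hr
      have h10 : (Z - 1) * (1 - Y) = 0 := by linear_combination key1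
      have hZ1 : Z = 1 := by
        rcases mul_eq_zero.mp h10 with h | h
        · linarith
        · linarith
      have hleY : (Y + 1/2) ^ 2 ≤ 0 := by nlinarith [hg, hZ1, hX]
      have hYh : Y = -1/2 := by
        have := sqz (le_antisymm hleY (sq_nonneg _)); linarith
      have hXY : X = Y ^ 2 := by
        linear_combination hg - Y * hZ1 - (Y + 1/2) * hYh
      refine Or.inl ⟨hXY, ?_⟩
      rw [hZ1, hYh]; norm_num
    · -- 2r+1 > 0 : Z ≤ 1 so Z = 1, then r = 1, then X + Y = 2
      have hZle : Z ≤ 1 := by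
        nlinarith [key1, mul_nonneg (sq_nonneg (r - 1)) (by linarith : (0:ℝ) ≤ 2 * r + 1)]
      have hZ1 : Z = 1 := le_antisymm hZle hZ
      have h0' : (r - 1) ^ 2 * (2 * r + 1) = 0 := by
        linear_combination key1 - (1 - Y) * hZ1
      have hr1 : r = 1 := by
        rcases mul_eq_zero.mp h0' with h | h
        · have := sqz h; linarith
        · linarith
      subst hr1
      exact Or.inr ⟨hZ1, by linear_combination hg - Y * hZ1⟩
  · exact absurd h0 hY
  · -- Y > 0 : then r > 0
    have hr3 : 0 < r ^ 3 := by nlinarith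
    have hr : 0 < r := by
      by_contra h
      push_neg at h
      nlinarith
    by_cases hY1 : Y = 1
    · subst hY1
      have h0' : (r - 1) ^ 2 * (2 * r + 1) = 0 := by linear_combination key1
      have hr1 : r = 1 := by
        rcases mul_eq_zero.mp h0' with h | h
        · have := sqz h; linarith
        · linarith
      subst hr1
      have hXv : X = 1 := by nlinarith [hg, hZ]
      have hZv : Z = 1 := by nlinarith [hg, hX]
      exact Or.inr ⟨hZv, by linarith⟩
    · have hne : (1 : ℝ) - Y ≠ 0 := sub_ne_zero_of_ne (Ne.symm hY1)
      have h2pos : 0 < (1 - Y) ^ 2 := pow_two_pos_of_ne_zero hne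
      have hprod : ((Z - 1) * (1 - Y)) * ((X - Y ^ 2) * (1 - Y)) =
          (-((r - 1) ^ 2 * (2 * r + 1))) * ((Y - r) ^ 2 * (Y + 2 * r)) := by
        rw [key1, key2]
      have hge : 0 ≤ (Z - 1) * (X - Y ^ 2) :=
        mul_nonneg (by linarith) (by linarith)
      have hle : (Z - 1) * (X - Y ^ 2) ≤ 0 := by
        nlinarith [hprod, h2pos, mul_nonneg (mul_nonneg (sq_nonneg (r - 1))
          (by linarith : (0:ℝ) ≤ 2 * r + 1))
          (mul_nonneg (sq_nonneg (Y - r)) (by linarith : (0:ℝ) ≤ Y + 2 * r))]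
      rcases mul_eq_zero.mp (le_antisymm hle hge) with h | h
      · -- Z = 1
        have hZ1 : Z = 1 := by linarith [sub_eq_zero.mp h]
        have h0' : (r - 1) ^ 2 * (2 * r + 1) = 0 := by
          linear_combination key1 - (1 - Y) * hZ1
        have hr1 : r = 1 := by
          rcases mul_eq_zero.mp h0' with h' | h'
          · have := sqz h'; linarith
          · linarith
        subst hr1
        exact Or.inr ⟨hZ1, by linear_combination hg - Y * hZ1⟩
      · -- X = Y²
        have hXY : X = Y ^ 2 := by linarith [sub_eq_zero.mp h]
        have h0' : (Y - r) ^ 2 * (Y + 2 * r) = 0 := by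
          linear_combination -key2 + (1 - Y) * hXY
        have hYr : Y = r := by
          rcases mul_eq_zero.mp h0' with h' | h'
          · have := sqz h'; linarith
          · linarith
        exact Or.inl ⟨hXY, by linear_combination hf - hXY - 3 * (Y + r) * hYr⟩

theorem stmt_5 (c u₀ u₁ u₂ : ℝ) (hc : c = 1 ∨ c = -1) (hu₀ : 0 < u₀)
    (hden : 0 < u₀ ^ 4 * (9 * u₂ ^ 2 + 1) + c * u₀ ^ 2 + (9 * u₁ ^ 2 + 1)) :
    Lfun c u₀ u₁ u₂ = 4 / 27 ↔
      (u₂ = 0 ∧ 9 * u₁ ^ 2 = (2 * u₀ ^ 2 + c) * (u₀ ^ 2 - c)) ∨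
      (u₁ = 0 ∧ 9 * u₂ ^ 2 = (2 * u₀⁻¹ ^ 2 + c) * (u₀⁻¹ ^ 2 - c)) := by
  have hu0 : u₀ ≠ 0 := hu₀.ne'
  have hc2 : c ^ 2 = 1 := by rcases hc with h | h <;> rw [h] <;> norm_num
  have hcne : c ≠ 0 := by rcases hc with h | h <;> rw [h] <;> norm_num
  constructor
  · intro h
    unfold Lfun at h
    rw [div_eq_div_iff (by positivity) (by norm_num : (27:ℝ) ≠ 0)] at h
    have h27 : 27 * (u₀ ^ 4 * (9 * u₂ ^ 2 + 1) + (c * u₀ ^ 2) * (9 * u₁ ^ 2 + 1)) ^ 2 =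
        4 * (u₀ ^ 4 * (9 * u₂ ^ 2 + 1) + c * u₀ ^ 2 + (9 * u₁ ^ 2 + 1)) ^ 3 := by
      linear_combination h
    obtain ⟨r, hf, hg⟩ := double_root _ _ hden h27
    have hX : (c * u₀ ^ 2) ^ 2 ≤ u₀ ^ 4 * (9 * u₂ ^ 2 + 1) := by
      nlinarith [mul_nonneg (sq_nonneg (u₀ ^ 2)) (sq_nonneg u₂), pow_pos hu₀ 4, hc2]
    have hZ1 : (1:ℝ) ≤ 9 * u₁ ^ 2 + 1 := by nlinarith [sq_nonneg u₁]
    have hYne : c * u₀ ^ 2 ≠ 0 := mul_ne_zero hcne (pow_ne_zero _ hu0)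
    rcases aux_key (u₀ ^ 4 * (9 * u₂ ^ 2 + 1)) (c * u₀ ^ 2) (9 * u₁ ^ 2 + 1) r hf hg
        hX hZ1 hYne with ⟨hA, hZv⟩ | ⟨hZv, hAY⟩
    · have hu2 : u₂ = 0 := by
        have h2 : u₂ ^ 2 ≤ 0 := by nlinarith [pow_pos hu₀ 4, hc2]
        exact sqz (le_antisymm h2 (sq_nonneg _))
      exact Or.inl ⟨hu2, by linear_combination hZv + (2 * u₀ ^ 4 + 1) * hc2⟩
    · have hu1 : u₁ = 0 := by
        have h2 : u₁ ^ 2 = 0 := by linarith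
        exact sqz h2
      refine Or.inr ⟨hu1, ?_⟩
      field_simp
      linear_combination u₀ ^ 4 * hc2 + hAY
  · intro h
    unfold Lfun
    rw [div_eq_div_iff (by positivity) (by norm_num : ((27:ℝ)) ≠ 0)]
    rcases h with ⟨h2, h1⟩ | ⟨h1, h2⟩
    · subst h2
      have hZe : (9:ℝ) * u₁ ^ 2 + 1 = 2 * u₀ ^ 4 - c * u₀ ^ 2 := by
        linear_combination h1 - hc2
      rw [hZe]
      linear_combination (27 * u₀ ^ 8 * (c ^ 2 - 1) - 108 * c * u₀ ^ 10 + 108 * u₀ ^ 12) * hc2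
    · subst h1
      have h2' : 9 * u₂ ^ 2 * u₀ ^ 4 = (2 + c * u₀ ^ 2) * (1 - c * u₀ ^ 2) := by
        field_simp at h2
        linear_combination h2
      set G : ℝ := 9 * u₂ ^ 2 * u₀ ^ 4 - (2 + c * u₀ ^ 2) * (1 - c * u₀ ^ 2) + u₀ ^ 4 * (1 - c ^ 2)
        with hGdef
      linear_combination (-(G) * (4 * G + 9)) * h2' + (u₀ ^ 4 * (G * (4 * G + 9))) * hc2
end
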